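/- Suppose n, m, k, d are non-negative integers, m ≥ 1, 2 ≤ b ≤ 10, d the number of base-b digits of L_k, and L_n = F_m·b^d + L_k. Then |1 - b^d/(√5·α^(n-m))| < 12/α^(n-k), where α = (1+√5)/2. -/
import Mathlib

def lucas : ℕ → ℕ
  | 0 => 2
  | 1 => 1
  | n + 2 => lucas (n + 1) + lucas n

noncomputable def gphi : ℝ := (1 + Real.sqrt 5) / 2
noncomputable def gpsi : ℝ := (1 - Real.sqrt 5) / 2

lemma sqrt5_pos : (0:ℝ) < Real.sqrt 5 := Real.sqrt_pos.mpr (by norm_num)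
lemma sqrt5_sq : Real.sqrt 5 ^ 2 = 5 := Real.sq_sqrt (by norm_num)

lemma gphi_pos : 0 < gphi := by
  unfold gphi; positivity

lemma one_le_gphi : 1 ≤ gphi := by
  unfold gphi
  nlinarith [sqrt5_sq, sqrt5_pos]

lemma abs_gpsi_le : |gpsi| ≤ 1 := by
  unfold gpsi
  rw [abs_le]
  constructor <;> nlinarith [sqrt5_sq, sqrt5_pos]

lemma lucas_pos : ∀ n, 0 < lucas n := by
  intro n
  induction n using Nat.twoStepInduction with
  | zero => norm_num [lucas]
  | one => norm_num [lucas]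
  | more n ih1 ih2 => simp only [lucas]; omega

lemma lucas_binet : ∀ n, (lucas n : ℝ) = gphi ^ n + gpsi ^ n := by
  intro n
  have h1 : gphi ^ 2 = gphi + 1 := by unfold gphi; nlinarith [sqrt5_sq]
  have h2 : gpsi ^ 2 = gpsi + 1 := by unfold gpsi; nlinarith [sqrt5_sq]
  induction n using Nat.twoStepInduction with
  | zero => norm_num [lucas, gphi, gpsi]
  | one => simp only [lucas]; unfold gphi gpsi; push_cast; ring
  | more n ih1 ih2 =>
    have : (lucas (n+2) : ℝ) = (lucas (n+1) : ℝ) + (lucas n : ℝ) := by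
      simp only [lucas]; push_cast; ring
    rw [this, ih1, ih2]
    have e1 : gphi ^ (n+2) = gphi ^ n * gphi ^ 2 := by ring
    have e2 : gpsi ^ (n+2) = gpsi ^ n * gpsi ^ 2 := by ring
    rw [e1, e2, h1, h2]; ring

lemma fib_binet : ∀ n, (Nat.fib n : ℝ) * Real.sqrt 5 = gphi ^ n - gpsi ^ n := by
  intro n
  have h1 : gphi ^ 2 = gphi + 1 := by unfold gphi; nlinarith [sqrt5_sq]
  have h2 : gpsi ^ 2 = gpsi + 1 := by unfold gpsi; nlinarith [sqrt5_sq]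
  induction n using Nat.twoStepInduction with
  | zero => norm_num
  | one => simp; unfold gphi gpsi; ring
  | more n ih1 ih2 =>
    rw [Nat.fib_add_two]
    push_cast
    have e1 : gphi ^ (n+2) = gphi ^ n * gphi ^ 2 := by ring
    have e2 : gpsi ^ (n+2) = gpsi ^ n * gpsi ^ 2 := by ring
    rw [add_mul, ih1, ih2, e1, e2, h1, h2]; ring

theorem gamma3_bound (n m k b d : ℕ) (hm : 1 ≤ m) (hb : 2 ≤ b) (hb' : b ≤ 10)
    (hd : d = Nat.log b (lucas k) + 1)
    (heq : lucas n = Nat.fib m * b ^ d + lucas k) :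
    |1 - (b : ℝ) ^ d / (Real.sqrt 5 * ((1 + Real.sqrt 5) / 2) ^ ((n : ℤ) - m))| <
      12 / ((1 + Real.sqrt 5) / 2) ^ ((n : ℤ) - k) := by
  have s5 := sqrt5_sq
  have spos := sqrt5_pos
  have hφ : (0:ℝ) < gphi := gphi_pos
  have hφ1 : (1:ℝ) ≤ gphi := one_le_gphi
  have hφn : (0:ℝ) < gphi ^ n := pow_pos hφ n
  have hφm : (0:ℝ) < gphi ^ m := pow_pos hφ m
  have hφk : (1:ℝ) ≤ gphi ^ k := one_le_pow₀ hφ1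
  have hψ : ∀ j : ℕ, |gpsi ^ j| ≤ 1 := fun j => by
    rw [abs_pow]; exact pow_le_one₀ (abs_nonneg _) abs_gpsi_le
  have hψn := abs_le.mp (hψ n)
  have hψm := abs_le.mp (hψ m)
  have hψk := abs_le.mp (hψ k)
  -- b^d bound
  have hlk : 0 < lucas k := lucas_pos k
  have hbd : b ^ d ≤ 10 * lucas k := by
    rw [hd, pow_succ]
    calc b ^ Nat.log b (lucas k) * b ≤ lucas k * 10 :=
          Nat.mul_le_mul (Nat.pow_log_le_self b hlk.ne') hb'
      _ = 10 * lucas k := by ring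
  have hbdR : (b:ℝ) ^ d ≤ 20 * gphi ^ k := by
    have h1 : ((b ^ d : ℕ):ℝ) ≤ ((10 * lucas k : ℕ):ℝ) := Nat.cast_le.mpr hbd
    push_cast at h1
    have h2 : (lucas k : ℝ) = gphi ^ k + gpsi ^ k := lucas_binet k
    nlinarith [hψk.2]
  have hbd0 : (0:ℝ) ≤ (b:ℝ) ^ d := by positivity
  -- cast heq
  have hc : (gphi ^ n + gpsi ^ n) = (Nat.fib m : ℝ) * (b:ℝ) ^ d + (gphi ^ k + gpsi ^ k) := by
    rw [← lucas_binet, ← lucas_binet]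
    exact_mod_cast congrArg (Nat.cast : ℕ → ℝ) heq
  have h1 : Real.sqrt 5 * (gphi ^ n + gpsi ^ n)
      = (gphi ^ m - gpsi ^ m) * (b:ℝ) ^ d + Real.sqrt 5 * (gphi ^ k + gpsi ^ k) := by
    linear_combination Real.sqrt 5 * hc + (b:ℝ) ^ d * fib_binet m
  -- rewrite zpows
  have hz1 : ((1 + Real.sqrt 5)/2 : ℝ) ^ ((n:ℤ) - m) = gphi ^ n / gphi ^ m := by
    rw [show ((1 + Real.sqrt 5)/2 : ℝ) = gphi from rfl,
        zpow_sub₀ (ne_of_gt hφ), zpow_natCast, zpow_natCast]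
  have hz2 : ((1 + Real.sqrt 5)/2 : ℝ) ^ ((n:ℤ) - k) = gphi ^ n / gphi ^ k := by
    rw [show ((1 + Real.sqrt 5)/2 : ℝ) = gphi from rfl,
        zpow_sub₀ (ne_of_gt hφ), zpow_natCast, zpow_natCast]
  rw [hz1, hz2]
  have key : 1 - (b:ℝ) ^ d / (Real.sqrt 5 * (gphi ^ n / gphi ^ m))
      = (Real.sqrt 5 * (gphi ^ k + gpsi ^ k - gpsi ^ n) - (b:ℝ) ^ d * gpsi ^ m)
        / (Real.sqrt 5 * gphi ^ n) := by
    have e1 : (b:ℝ) ^ d / (Real.sqrt 5 * (gphi ^ n / gphi ^ m))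
        = (b:ℝ) ^ d * gphi ^ m / (Real.sqrt 5 * gphi ^ n) := by
      rw [show Real.sqrt 5 * (gphi ^ n / gphi ^ m)
            = (Real.sqrt 5 * gphi ^ n) / gphi ^ m by ring,
          div_div_eq_mul_div]
    rw [eq_div_iff (mul_pos spos hφn).ne', e1, sub_mul, one_mul,
        div_mul_cancel₀ _ (mul_pos spos hφn).ne']
    linear_combination h1
  rw [key, abs_div, abs_of_pos (mul_pos spos hφn)]
  have hnum : |Real.sqrt 5 * (gphi ^ k + gpsi ^ k - gpsi ^ n) - (b:ℝ) ^ d * gpsi ^ m|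
      < 12 * Real.sqrt 5 * gphi ^ k := by
    rw [abs_lt]
    constructor <;> nlinarith [hψn.1, hψn.2, hψm.1, hψm.2, hψk.1, hψk.2,
      mul_le_mul_of_nonneg_left hψm.2 hbd0, mul_le_mul_of_nonneg_left hψm.1 hbd0]
  rw [div_lt_iff₀ (mul_pos spos hφn)]
  have hrhs : 12 / (gphi ^ n / gphi ^ k) * (Real.sqrt 5 * gphi ^ n)
      = 12 * Real.sqrt 5 * gphi ^ k := by
    rw [div_div_eq_mul_div, div_mul_eq_mul_div, div_eq_iff hφn.ne']
    ring
  rw [hrhs]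
  exact hnum
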